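/- Let n ≥ 1, let L be a De Morgan lattice, let I be a nonempty ideal of L, and let F be an n-filter on L with F ∩ I = ∅. If F is complete (respectively consistent, classical, Kalman), then there exists a prime n-filter G on L that is complete (respectively consistent, classical, Kalman) with F ⊆ G and G ∩ I = ∅. -/

import Mathlib

/-- A De Morgan lattice: a distributive lattice with an antitone involution. -/
class DeMorgan (L : Type*) extends DistribLattice L where
  dneg : L → L
  dneg_dneg : ∀ x : L, dneg (dneg x) = x
  dneg_sup : ∀ x y : L, dneg (x ⊔ y) = dneg x ⊓ dneg y

prefix:max "∼" => DeMorgan.dneg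

section Defs

variable {α : Type*}

/-- An upward closed subset of a lattice. -/
def IsUpset [Lattice α] (F : Set α) : Prop :=
  ∀ ⦃x y : α⦄, x ∈ F → x ≤ y → y ∈ F

/-- A lattice filter: an upset closed under binary meets. -/
def IsLatFilter [Lattice α] (F : Set α) : Prop :=
  IsUpset F ∧ ∀ x y : α, x ∈ F → y ∈ F → x ⊓ y ∈ F

/-- An `n`-filter: an upset such that for every nonempty finite `Y`, if the meet of
every nonempty subset of `Y` of size at most `n` lies in `F`, then so does the meet of `Y`. -/
def IsNFilter [Lattice α] (n : ℕ) (F : Set α) : Prop :=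
  IsUpset F ∧ ∀ (Y : Finset α) (hY : Y.Nonempty),
    (∀ (X : Finset α) (hX : X.Nonempty), X ⊆ Y → X.card ≤ n → X.inf' hX id ∈ F) →
    Y.inf' hY id ∈ F

/-- A prime upset: `x ⊔ y ∈ F` implies `x ∈ F` or `y ∈ F`. -/
def IsPrimeUpset [Lattice α] (F : Set α) : Prop :=
  ∀ x y : α, x ⊔ y ∈ F → x ∈ F ∨ y ∈ F

/-- A downward closed subset of a lattice. -/
def IsDownset [Lattice α] (I : Set α) : Prop :=
  ∀ ⦃x y : α⦄, x ∈ I → y ≤ x → y ∈ I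

/-- A lattice ideal: a downset closed under binary joins. -/
def IsIdeal [Lattice α] (I : Set α) : Prop :=
  IsDownset I ∧ ∀ x y : α, x ∈ I → y ∈ I → x ⊔ y ∈ I

/-- An `n`-ideal: the order dual notion of an `n`-filter. -/
def IsNIdeal [Lattice α] (n : ℕ) (I : Set α) : Prop :=
  IsDownset I ∧ ∀ (Y : Finset α) (hY : Y.Nonempty),
    (∀ (X : Finset α) (hX : X.Nonempty), X ⊆ Y → X.card ≤ n → X.sup' hX id ∈ I) →
    Y.sup' hY id ∈ I

variable {L : Type*} [DeMorgan L]

/-- Almost complete upset: `x ∈ F` implies `x ⊓ (y ⊔ ∼y) ∈ F`. -/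
def AlmostComplete (F : Set L) : Prop := ∀ x ∈ F, ∀ y : L, x ⊓ (y ⊔ ∼y) ∈ F

/-- Complete upset: almost complete and nonempty. -/
def IsCompleteUpset (F : Set L) : Prop := AlmostComplete F ∧ F.Nonempty

/-- Almost consistent upset: `(x ⊓ ∼x) ⊔ y ∈ F` implies `y ∈ F`. -/
def AlmostConsistent (F : Set L) : Prop := ∀ x y : L, (x ⊓ ∼x) ⊔ y ∈ F → y ∈ F

/-- Consistent upset: almost consistent and not total. -/
def IsConsistentUpset (F : Set L) : Prop := AlmostConsistent F ∧ F ≠ Set.univ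

/-- Classical upset: complete and consistent. -/
def IsClassicalUpset (F : Set L) : Prop := IsCompleteUpset F ∧ IsConsistentUpset F

/-- Kalman upset. -/
def IsKalmanUpset (F : Set L) : Prop :=
  ∀ x y z u : L, ((x ⊓ ∼x) ⊓ z) ⊔ u ∈ F → ((y ⊔ ∼y) ⊓ z) ⊔ u ∈ F

/-- A homomorphism of De Morgan lattices. -/
def IsDMHom {L M : Type*} [DeMorgan L] [DeMorgan M] (h : L → M) : Prop :=
  (∀ x y : L, h (x ⊓ y) = h x ⊓ h y) ∧ (∀ x y : L, h (x ⊔ y) = h x ⊔ h y) ∧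
    ∀ x : L, h (∼x) = ∼(h x)

/-- The filter generated by all elements of the form `x ⊔ ∼x`. -/
def Fcomp (L : Type*) [DeMorgan L] : Set L :=
  {a | ∃ (s : Finset L) (hs : s.Nonempty), s.inf' hs (fun x => x ⊔ ∼x) ≤ a}

/-- The `n`-filter generated by a set. -/
def nFilterGen (n : ℕ) (U : Set L) : Set L :=
  ⋂₀ {F : Set L | IsNFilter n F ∧ U ⊆ F}

/-- `Comp U`. -/
def CompCl (U : Set L) : Set L := {x | ∃ a ∈ U, ∃ f ∈ Fcomp L, a ⊓ f ≤ x}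

/-- `Cons U`. -/
def ConsCl (U : Set L) : Set L := {x | ∃ f ∈ Fcomp L, ∼f ⊔ x ∈ U}

/-- A congruence of De Morgan lattices, as a binary relation. -/
def IsCongruence (θ : L → L → Prop) : Prop :=
  Equivalence θ ∧
  (∀ a b c d : L, θ a b → θ c d → θ (a ⊓ c) (b ⊓ d)) ∧
  (∀ a b c d : L, θ a b → θ c d → θ (a ⊔ c) (b ⊔ d)) ∧
  ∀ a b : L, θ a b → θ (∼a) (∼b)

end Defs

/-- The four-element De Morgan lattice `DM₁` on `Bool × Bool`. -/
instance : DeMorgan (Bool × Bool) :=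
  { (inferInstance : DistribLattice (Bool × Bool)) with
    dneg := fun p => (!p.2, !p.1)
    dneg_dneg := by decide
    dneg_sup := by decide }

/-- Powers of `DM₁`, with componentwise operations. -/
instance {ι : Type*} : DeMorgan (ι → Bool × Bool) :=
  { (inferInstance : DistribLattice (ι → Bool × Bool)) with
    dneg := fun f i => ∼(f i)
    dneg_dneg := fun f => funext fun i => DeMorgan.dneg_dneg (f i)
    dneg_sup := fun f g => funext fun i => DeMorgan.dneg_sup (f i) (g i) }

/-!
Zorn's lemma gives an `n`-filter `M ⊇ F`, maximal among the `n`-filters disjoint from `I` that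
have the property in question; all four properties survive unions of chains. `M` is prime: if
`a ⊔ b ∈ M` with `a, b ∉ M`, then `{x | b ⊔ x ∈ M}` is an `n`-filter with the same property
properly containing `M` (it contains `a`), so by maximality it meets `I` in some `i`. Likewise
`{x | i ⊔ x ∈ M}` properly contains `M` (it contains `b`) and meets `I` in some `j`, and then
`i ⊔ j ∈ M ∩ I`. Nonemptiness of `G` comes from `F ⊆ G`, and `G ≠ L` from `G ∩ I = ∅`.
-/

section NFilter

variable {α β : Type*}

def InfHom.supLeft [DistribLattice α] (e : α) : InfHom α α where
  toFun := (e ⊔ ·)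
  map_inf' := sup_inf_left e

theorem IsNFilter.preimage [Lattice α] [Lattice β] {n : ℕ} {G : Set β} (hG : IsNFilter n G)
    (f : InfHom α β) : IsNFilter n (f ⁻¹' G) := by
  classical
  refine ⟨fun x y hx hxy => hG.1 hx (OrderHomClass.mono f hxy), fun Y hY hsmall => ?_⟩
  have hmem := hG.2 (Y.image f) (hY.image f) fun X' hX' hX'Y hcard => by
    have hsurj : Set.SurjOn f Y X' := fun x hx => by simpa using hX'Y hx
    obtain ⟨X, hXY, hinj, rfl⟩ := Finset.exists_subset_injOn_image_eq_of_surjOn _ _ hsurj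
    have hX : X.Nonempty := Finset.image_nonempty.mp hX'
    have := hsmall X hX (by exact_mod_cast hXY) (Finset.card_image_of_injOn hinj ▸ hcard)
    simpa [map_finset_inf'] using this
  simpa [map_finset_inf'] using hmem

theorem IsNFilter.sUnion_of_isChain [Lattice α] {n : ℕ} {c : Set (Set α)}
    (hc : IsChain (· ⊆ ·) c) (hne : c.Nonempty) (h : ∀ G ∈ c, IsNFilter n G) :
    IsNFilter n (⋃₀ c) := by
  refine ⟨fun x y ⟨G, hG, hx⟩ hxy => ⟨G, hG, (h G hG).1 hx hxy⟩, fun Y hY hsmall => ?_⟩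
  set small : Set (Finset α) := {X | X ⊆ Y ∧ X.Nonempty ∧ X.card ≤ n}
  have hfin : small.Finite :=
    Y.powerset.finite_toSet.subset fun X hX => Finset.mem_powerset.mpr hX.1
  obtain ⟨G, hG, hsub⟩ := hc.directedOn.exists_mem_subset_of_finite_of_subset_sUnion hne
    (hfin.dependent_image fun X hX => X.inf' hX.2.1 id)
    (fun _ ⟨X, hX, hXa⟩ => hXa ▸ hsmall X hX.2.1 hX.1 hX.2.2)
  exact ⟨G, hG, (h G hG).2 Y hY fun X hX hXY hcard => hsub ⟨X, ⟨hXY, hX, hcard⟩, rfl⟩⟩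

end NFilter

section PrimeSeparation

variable {α : Type*} [DistribLattice α] {n : ℕ} {P : Set α → Prop} {I : Set α}

theorem isPrimeUpset_of_maximal
    (hP_sup : ∀ (G : Set α) (e : α), IsUpset G → P G → P ((e ⊔ ·) ⁻¹' G))
    (hI : IsIdeal I) {M : Set α} (hM : Maximal (fun G => IsNFilter n G ∧ P G ∧ G ∩ I = ∅) M) :
    IsPrimeUpset M := by
  obtain ⟨⟨hMn, hMP, hMI⟩, hmax⟩ := hM
  have meets : ∀ e a, a ∉ M → e ⊔ a ∈ M → ∃ i ∈ I, e ⊔ i ∈ M := by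
    intro e a ha hea
    by_contra! hno
    have hdisj : (e ⊔ ·) ⁻¹' M ∩ I = ∅ :=
      Set.eq_empty_iff_forall_notMem.mpr fun x ⟨hx, hxI⟩ => hno x hxI hx
    exact ha (hmax ⟨hMn.preimage (InfHom.supLeft e), hP_sup M e hMn.1 hMP, hdisj⟩
      (fun x hx => hMn.1 hx le_sup_right) hea)
  intro a b hab
  by_contra! ⟨ha, hb⟩
  obtain ⟨i, hi, hbi⟩ := meets b a ha (by rwa [sup_comm])
  obtain ⟨j, hj, hij⟩ := meets i b hb (by rwa [sup_comm])
  exact Set.eq_empty_iff_forall_notMem.mp hMI _ ⟨hij, hI.2 i j hi hj⟩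

theorem exists_prime_nFilter_of_disjoint
    (hP_sUnion : ∀ c : Set (Set α), IsChain (· ⊆ ·) c → c.Nonempty → (∀ G ∈ c, P G) →
      P (⋃₀ c))
    (hP_sup : ∀ (G : Set α) (e : α), IsUpset G → P G → P ((e ⊔ ·) ⁻¹' G))
    (hI : IsIdeal I) {F : Set α} (hF : IsNFilter n F) (hPF : P F) (hdisj : F ∩ I = ∅) :
    ∃ G : Set α, IsNFilter n G ∧ IsPrimeUpset G ∧ P G ∧ F ⊆ G ∧ G ∩ I = ∅ := by
  obtain ⟨M, hFM, hM⟩ := zorn_subset_nonempty {G | IsNFilter n G ∧ P G ∧ G ∩ I = ∅}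
    (fun c hcS hc hne => ⟨⋃₀ c,
      ⟨.sUnion_of_isChain hc hne fun G hG => (hcS hG).1,
        hP_sUnion c hc hne fun G hG => (hcS hG).2.1,
        Set.disjoint_iff_inter_eq_empty.mp <| Set.disjoint_sUnion_left.mpr fun G hG =>
          Set.disjoint_iff_inter_eq_empty.mpr (hcS hG).2.2⟩,
      fun _ => Set.subset_sUnion_of_mem⟩) F ⟨hF, hPF, hdisj⟩
  exact ⟨M, hM.1.1, isPrimeUpset_of_maximal hP_sup hI hM, hM.1.2.1, hFM, hM.1.2.2⟩

end PrimeSeparation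

section DeMorganUpsets

variable {L : Type*} [DeMorgan L] {S : Set (Set L)} {G : Set L}

theorem almostComplete_sUnion (hS : ∀ G ∈ S, AlmostComplete G) : AlmostComplete (⋃₀ S) :=
  fun _ ⟨G, hG, hx⟩ y => ⟨G, hG, hS G hG _ hx y⟩

theorem almostConsistent_sUnion (hS : ∀ G ∈ S, AlmostConsistent G) :
    AlmostConsistent (⋃₀ S) :=
  fun x y ⟨G, hG, hxy⟩ => ⟨G, hG, hS G hG x y hxy⟩

theorem isKalmanUpset_sUnion (hS : ∀ G ∈ S, IsKalmanUpset G) : IsKalmanUpset (⋃₀ S) :=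
  fun x y z u ⟨G, hG, h⟩ => ⟨G, hG, hS G hG x y z u h⟩

theorem AlmostComplete.preimage_sup (hG : AlmostComplete G) (hup : IsUpset G) (e : L) :
    AlmostComplete ((e ⊔ ·) ⁻¹' G) := fun x hx y =>
  hup (hG (e ⊔ x) hx y) (show (e ⊔ x) ⊓ (y ⊔ ∼y) ≤ e ⊔ x ⊓ (y ⊔ ∼y) by
    rw [sup_inf_left]; exact inf_le_inf_left _ le_sup_right)

theorem AlmostConsistent.preimage_sup (hG : AlmostConsistent G) (e : L) :
    AlmostConsistent ((e ⊔ ·) ⁻¹' G) := fun x y h =>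
  hG x (e ⊔ y) (by rwa [Set.mem_preimage, sup_left_comm] at h)

theorem IsKalmanUpset.preimage_sup (hG : IsKalmanUpset G) (e : L) :
    IsKalmanUpset ((e ⊔ ·) ⁻¹' G) := fun x y z u h => by
  simpa only [Set.mem_preimage, sup_left_comm e] using
    hG x y z (e ⊔ u) (by rwa [Set.mem_preimage, sup_left_comm] at h)

end DeMorganUpsets

theorem statement17_general {L : Type*} [DeMorgan L] (n : ℕ)
    (F I : Set L) (hI : IsIdeal I) (hIne : I.Nonempty)
    (hF : IsNFilter n F) (hdisj : F ∩ I = ∅) :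
    (IsCompleteUpset F → ∃ G : Set L, IsNFilter n G ∧ IsPrimeUpset G ∧
      IsCompleteUpset G ∧ F ⊆ G ∧ G ∩ I = ∅) ∧
    (IsConsistentUpset F → ∃ G : Set L, IsNFilter n G ∧ IsPrimeUpset G ∧
      IsConsistentUpset G ∧ F ⊆ G ∧ G ∩ I = ∅) ∧
    (IsClassicalUpset F → ∃ G : Set L, IsNFilter n G ∧ IsPrimeUpset G ∧
      IsClassicalUpset G ∧ F ⊆ G ∧ G ∩ I = ∅) ∧
    (IsKalmanUpset F → ∃ G : Set L, IsNFilter n G ∧ IsPrimeUpset G ∧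
      IsKalmanUpset G ∧ F ⊆ G ∧ G ∩ I = ∅) := by
  obtain ⟨i, hi⟩ := hIne
  have ne_univ (G : Set L) (hG : G ∩ I = ∅) : G ≠ Set.univ := fun hGu =>
    Set.eq_empty_iff_forall_notMem.mp hG i ⟨hGu ▸ Set.mem_univ i, hi⟩
  refine ⟨fun ⟨hFc, hFne⟩ => ?_, fun ⟨hFcons, _⟩ => ?_, fun ⟨⟨hFc, hFne⟩, hFcons, _⟩ => ?_,
    fun hFk => ?_⟩
  · obtain ⟨G, hGn, hGp, hGc, hFG, hGI⟩ := exists_prime_nFilter_of_disjoint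
      (fun _ _ _ => almostComplete_sUnion) (fun _ e hup hG => hG.preimage_sup hup e)
      hI hF hFc hdisj
    exact ⟨G, hGn, hGp, ⟨hGc, hFne.mono hFG⟩, hFG, hGI⟩
  · obtain ⟨G, hGn, hGp, hGcons, hFG, hGI⟩ := exists_prime_nFilter_of_disjoint
      (fun _ _ _ => almostConsistent_sUnion) (fun _ e _ hG => hG.preimage_sup e)
      hI hF hFcons hdisj
    exact ⟨G, hGn, hGp, ⟨hGcons, ne_univ G hGI⟩, hFG, hGI⟩
  · obtain ⟨G, hGn, hGp, ⟨hGc, hGcons⟩, hFG, hGI⟩ := exists_prime_nFilter_of_disjoint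
      (P := fun G => AlmostComplete G ∧ AlmostConsistent G)
      (fun _ _ _ hS => ⟨almostComplete_sUnion fun G hG => (hS G hG).1,
        almostConsistent_sUnion fun G hG => (hS G hG).2⟩)
      (fun _ e hup hG => ⟨hG.1.preimage_sup hup e, hG.2.preimage_sup e⟩)
      hI hF ⟨hFc, hFcons⟩ hdisj
    exact ⟨G, hGn, hGp, ⟨⟨hGc, hFne.mono hFG⟩, hGcons, ne_univ G hGI⟩, hFG, hGI⟩
  · exact exists_prime_nFilter_of_disjoint (fun _ _ _ => isKalmanUpset_sUnion)
      (fun _ e _ hG => hG.preimage_sup e) hI hF hFk hdisj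

/-- prime separation for complete, consistent, classical, and Kalman
`n`-filters on De Morgan lattices. -/
theorem statement17 {L : Type*} [DeMorgan L] [Nonempty L] (n : ℕ) (hn : 1 ≤ n)
    (F I : Set L) (hI : IsIdeal I) (hIne : I.Nonempty)
    (hF : IsNFilter n F) (hdisj : F ∩ I = ∅) :
    (IsCompleteUpset F → ∃ G : Set L, IsNFilter n G ∧ IsPrimeUpset G ∧
      IsCompleteUpset G ∧ F ⊆ G ∧ G ∩ I = ∅) ∧
    (IsConsistentUpset F → ∃ G : Set L, IsNFilter n G ∧ IsPrimeUpset G ∧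
      IsConsistentUpset G ∧ F ⊆ G ∧ G ∩ I = ∅) ∧
    (IsClassicalUpset F → ∃ G : Set L, IsNFilter n G ∧ IsPrimeUpset G ∧
      IsClassicalUpset G ∧ F ⊆ G ∧ G ∩ I = ∅) ∧
    (IsKalmanUpset F → ∃ G : Set L, IsNFilter n G ∧ IsPrimeUpset G ∧
      IsKalmanUpset G ∧ F ⊆ G ∧ G ∩ I = ∅) :=
  statement17_general n F I hI hIne hF hdisj
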